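/- arXiv:2202.04282 — 8 statements merged into one kernel-verified Lean document; each statement's English description precedes it below -/
import Mathlib

section
/- Every irreducible linear order is indecomposable. In particular, for any linear order L, the linear order ω ×ₗ L (an ω-indexed sum of copies of L) is indecomposable: if ω ×ₗ L embeds into A + B for linear orders A, B, then ω ×ₗ L embeds into A or into B. -/
/- `A ⊕ₗ B` is the ordered sum; `ℕ ×ₗ L = ∑_{n∈ω} L` and
`ℕᵒᵈ ×ₗ L = ∑_{n∈ω*} L` (the index coordinate is the more significant one). -/

/-- A linear order is indecomposable if whenever it embeds into a sum `A + B`,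
it embeds into `A` or into `B`. -/
def IsIndecomposable (L : Type) [LinearOrder L] : Prop :=
  ∀ (A B : Type) [LinearOrder A] [LinearOrder B],
    Nonempty (L ↪o (A ⊕ₗ B)) → Nonempty (L ↪o A) ∨ Nonempty (L ↪o B)

/-- A linear order is irreducible if it is a singleton or isomorphic to
`ω ×ₗ L'` or `ω* ×ₗ L'` for some linear order `L'`. -/
def IsIrredLO (L : Type) [LinearOrder L] : Prop :=
  Nonempty (L ≃o PUnit.{1}) ∨
    ∃ (L' : Type) (_ : LinearOrder L'),
      Nonempty (L ≃o (ℕ ×ₗ L')) ∨ Nonempty (L ≃o (ℕᵒᵈ ×ₗ L'))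

/-!
If `f : L ↪o A ⊕ₗ B` does not land in `A`, some `f x₀` lies in `B`, and then so does everything
above `f x₀`. So `L` embeds into `B` as soon as it has a copy of itself above every point, as
`ω ×ₗ L'` does (shift the index), and dually for `ω* ×ₗ L'`. A singleton is its own copy.
-/

open Sum

section SumLex

variable {L A B : Type*} [LinearOrder L] [LinearOrder A] [LinearOrder B]

lemma nonempty_orderEmbedding_of_forall_inl (f : L ↪o A ⊕ₗ B)
    (h : ∀ x, ∃ a, toLex (inl a) = f x) : Nonempty (L ↪o A) := by
  choose g hg using h
  exact ⟨.ofStrictMono g fun x y hxy =>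
    Sum.Lex.inl_lt_inl_iff.1 (by simpa only [← hg] using f.strictMono hxy)⟩

lemma nonempty_orderEmbedding_of_forall_inr (f : L ↪o A ⊕ₗ B)
    (h : ∀ x, ∃ b, toLex (inr b) = f x) : Nonempty (L ↪o B) := by
  choose g hg using h
  exact ⟨.ofStrictMono g fun x y hxy =>
    Sum.Lex.inr_lt_inr_iff.1 (by simpa only [← hg] using f.strictMono hxy)⟩

lemma Sum.Lex.exists_inr_of_inr_le {b : B} {z : A ⊕ₗ B} (h : toLex (inr b) ≤ z) :
    ∃ b', toLex (inr b') = z := by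
  rcases hz : ofLex z with a | b'
  · rw [← toLex_ofLex z, hz] at h
    exact absurd h Sum.Lex.not_inr_le_inl
  · exact ⟨b', by rw [← hz, toLex_ofLex]⟩

end SumLex

namespace IsIndecomposable

variable {L M : Type} [LinearOrder L] [LinearOrder M]

lemma of_orderIso (e : L ≃o M) (hM : IsIndecomposable M) : IsIndecomposable L := by
  intro A B _ _ ⟨f⟩
  exact (hM A B ⟨e.symm.toOrderEmbedding.trans f⟩).imp
    (fun ⟨g⟩ => ⟨e.toOrderEmbedding.trans g⟩) fun ⟨g⟩ => ⟨e.toOrderEmbedding.trans g⟩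

lemma of_orderDual (h : IsIndecomposable Lᵒᵈ) : IsIndecomposable L := by
  intro A B _ _ ⟨f⟩
  exact (h Bᵒᵈ Aᵒᵈ ⟨f.dual.trans (OrderIso.sumLexDualAntidistrib A B).toOrderEmbedding⟩).symm.imp
    (fun ⟨g⟩ => ⟨g.dual⟩) fun ⟨g⟩ => ⟨g.dual⟩

lemma of_forall_exists_embedding_ge (h : ∀ x : L, ∃ g : L ↪o L, ∀ y, x ≤ g y) :
    IsIndecomposable L := by
  intro A B _ _ ⟨f⟩
  by_cases hA : ∀ x, ∃ a, toLex (inl a) = f x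
  · exact Or.inl (nonempty_orderEmbedding_of_forall_inl f hA)
  push Not at hA
  obtain ⟨x₀, hx₀⟩ := hA
  obtain ⟨b₀, hb₀⟩ : ∃ b, toLex (inr b) = f x₀ := by
    rcases hz : ofLex (f x₀) with a | b
    · exact absurd (by rw [← hz, toLex_ofLex]) (hx₀ a)
    · exact ⟨b, by rw [← hz, toLex_ofLex]⟩
  obtain ⟨g, hg⟩ := h x₀
  refine Or.inr (nonempty_orderEmbedding_of_forall_inr (g.trans f) fun y => ?_)
  exact Sum.Lex.exists_inr_of_inr_le (hb₀.trans_le (f.monotone (hg y)))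

lemma of_forall_exists_embedding_le (h : ∀ x : L, ∃ g : L ↪o L, ∀ y, g y ≤ x) :
    IsIndecomposable L :=
  of_orderDual <| of_forall_exists_embedding_ge fun x =>
    let ⟨g, hg⟩ := h (OrderDual.ofDual x)
    ⟨g.dual, hg⟩

end IsIndecomposable

def OrderEmbedding.prodLexMapFst {α β : Type*} [LinearOrder α] [Preorder β]
    (γ : Type*) [LinearOrder γ] (φ : α ↪o β) : α ×ₗ γ ↪o β ×ₗ γ :=
  .ofStrictMono (fun x => toLex (φ (ofLex x).1, (ofLex x).2)) fun x y hxy => by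
    rcases Prod.Lex.lt_iff.1 hxy with h | ⟨h1, h2⟩
    · exact Prod.Lex.lt_iff.2 (Or.inl (φ.strictMono h))
    · exact Prod.Lex.lt_iff.2 (Or.inr ⟨congrArg φ h1, h2⟩)

section NatLex

variable (γ : Type) [LinearOrder γ]

lemma isIndecomposable_nat_lex : IsIndecomposable (ℕ ×ₗ γ) :=
  .of_forall_exists_embedding_ge fun x =>
    ⟨.prodLexMapFst γ (.addLeft ((ofLex x).1 + 1)), fun _ =>
      (Prod.Lex.lt_iff.2 (.inl (Nat.lt_add_right _ (Nat.lt_succ_self _)))).le⟩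

lemma isIndecomposable_natDual_lex : IsIndecomposable (ℕᵒᵈ ×ₗ γ) :=
  .of_forall_exists_embedding_le fun x =>
    ⟨.prodLexMapFst γ (OrderEmbedding.addLeft (OrderDual.ofDual (ofLex x).1 + 1)).dual, fun _ =>
      (Prod.Lex.lt_iff.2 (.inl (Nat.lt_add_right _ (Nat.lt_succ_self _)))).le⟩

end NatLex

lemma isIndecomposable_of_subsingleton (L : Type) [LinearOrder L] [Subsingleton L] :
    IsIndecomposable L :=
  .of_forall_exists_embedding_ge fun _ =>
    ⟨(OrderIso.refl L).toOrderEmbedding, fun _ => (Subsingleton.elim _ _).le⟩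

/-- Every irreducible linear order is indecomposable; in particular `ω ×ₗ L`
is indecomposable for every linear order `L`. -/
theorem stmt_1 :
    (∀ (L : Type) [LinearOrder L], IsIrredLO L → IsIndecomposable L) ∧
      (∀ (L : Type) [LinearOrder L], IsIndecomposable (ℕ ×ₗ L)) := by
  refine ⟨fun L _ hL => ?_, fun L _ => isIndecomposable_nat_lex L⟩
  rcases hL with ⟨⟨e⟩⟩ | ⟨L', _, ⟨⟨e⟩⟩ | ⟨⟨e⟩⟩⟩
  · exact .of_orderIso e (isIndecomposable_of_subsingleton _)
  · exact .of_orderIso e (isIndecomposable_nat_lex L')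
  · exact .of_orderIso e (isIndecomposable_natDual_lex L')
end

section
/- The linear order ω ×ₗ L is indecomposable for every linear order L: if there is an order embedding of ∑_{n ∈ ω} L into L₁ + L₂, then either ∑_{n ∈ ω} L embeds into L₁, or ∑_{n ∈ ω} L embeds into L₂. -/
/-!
An embedding `f` of `ℕ ×ₗ L` into `L₁ ⊕ₗ L₂` either stays inside `L₁`, or hits `L₂` at some
point `x₀`. In the second case, since `L₂` is a final segment of `L₁ ⊕ₗ L₂`, everything above
`x₀` is sent into `L₂`; and `ℕ ×ₗ L` embeds into the part above `x₀` by shifting the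
`ℕ`-coordinate past that of `x₀`.
-/

namespace Sum.Lex

variable {L₁ L₂ : Type*} [LE L₁] [LE L₂]

theorem exists_eq_inr_of_inr_le {b : L₂} {x : L₁ ⊕ₗ L₂} (h : toLex (inr b) ≤ x) :
    ∃ c, x = toLex (inr c) := by
  rcases x with _ | c
  · exact absurd h not_inr_le_inl
  · exact ⟨c, rfl⟩

end Sum.Lex

namespace OrderEmbedding

variable {α L₁ L₂ : Type*} [PartialOrder α] [Preorder L₁] [Preorder L₂]

theorem nonempty_of_forall_eq_inl (f : α ↪o L₁ ⊕ₗ L₂)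
    (hf : ∀ a, ∃ b, f a = toLex (Sum.inl b)) : Nonempty (α ↪o L₁) := by
  choose g hg using hf
  exact ⟨ofMapLEIff g fun a b => by
    rw [← Sum.Lex.inl_le_inl_iff (β := L₂), ← hg, ← hg, f.le_iff_le]⟩

theorem nonempty_of_forall_eq_inr (f : α ↪o L₁ ⊕ₗ L₂)
    (hf : ∀ a, ∃ c, f a = toLex (Sum.inr c)) : Nonempty (α ↪o L₂) := by
  choose g hg using hf
  exact ⟨ofMapLEIff g fun a b => by
    rw [← Sum.Lex.inr_le_inr_iff (α := L₁), ← hg, ← hg, f.le_iff_le]⟩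

theorem nonempty_or_nonempty_of_sumLex (hα : ∀ x : α, ∃ σ : α ↪o α, ∀ y, x ≤ σ y)
    (f : α ↪o L₁ ⊕ₗ L₂) : Nonempty (α ↪o L₁) ∨ Nonempty (α ↪o L₂) := by
  by_cases hinr : ∃ x₀ c₀, f x₀ = toLex (Sum.inr c₀)
  · obtain ⟨x₀, c₀, hx₀⟩ := hinr
    obtain ⟨σ, hσ⟩ := hα x₀
    refine .inr (nonempty_of_forall_eq_inr (σ.trans f) fun y => ?_)
    exact Sum.Lex.exists_eq_inr_of_inr_le (hx₀ ▸ f.monotone (hσ y))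
  · push Not at hinr
    refine .inl (nonempty_of_forall_eq_inl f fun a => ?_)
    rcases h : f a with b | c
    · exact ⟨b, rfl⟩
    · exact absurd h (hinr a c)

def prodLexMapLeft {γ β : Type*} [Preorder γ] [PartialOrder β] (g : α ↪o γ) :
    α ×ₗ β ↪o γ ×ₗ β :=
  ofMapLEIff (fun x : α ×ₗ β => toLex (g (ofLex x).1, (ofLex x).2)) fun x y => by
    simp [Prod.Lex.le_iff, g.lt_iff_lt, g.eq_iff_eq]

end OrderEmbedding

theorem Prod.Lex.exists_orderEmbedding_nat_le (L : Type*) [PartialOrder L] (x : ℕ ×ₗ L) :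
    ∃ σ : ℕ ×ₗ L ↪o ℕ ×ₗ L, ∀ y, x ≤ σ y := by
  refine ⟨OrderEmbedding.prodLexMapLeft (OrderEmbedding.addLeft ((ofLex x).1 + 1)), fun y => ?_⟩
  refine (Prod.Lex.lt_iff.2 (.inl ?_)).le
  change (ofLex x).1 < (ofLex x).1 + 1 + (ofLex y).1
  omega

/-- `ω ×ₗ L` is indecomposable: any order embedding of `∑_{n∈ω} L` into
`L₁ + L₂` yields an embedding into `L₁` or into `L₂`. -/
theorem stmt_2 (L L₁ L₂ : Type) [LinearOrder L] [LinearOrder L₁] [LinearOrder L₂]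
    (h : Nonempty ((ℕ ×ₗ L) ↪o (L₁ ⊕ₗ L₂))) :
    Nonempty ((ℕ ×ₗ L) ↪o L₁) ∨ Nonempty ((ℕ ×ₗ L) ↪o L₂) :=
  OrderEmbedding.nonempty_or_nonempty_of_sumLex (Prod.Lex.exists_orderEmbedding_nat_le L) h.some
end

section
/- If L ×ₗ ℤ (i.e., ℤ-many consecutive copies of L) is an indecomposable linear order, then L is indecomposable. -/
open Set

theorem Prod.Lex.strictMono_toLex_mk {α β : Type*} [Preorder α] [Preorder β] (a : α) :
    StrictMono fun b : β => toLex (a, b) :=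
  fun _ _ h => Prod.Lex.toLex_lt_toLex.mpr (Or.inr ⟨rfl, h⟩)

def OrderEmbedding.prodLex {α β γ δ : Type*} [LinearOrder α] [Preorder β] [LinearOrder γ]
    [Preorder δ] (f : α ↪o β) (g : γ ↪o δ) : α ×ₗ γ ↪o β ×ₗ δ :=
  OrderEmbedding.ofStrictMono (fun p => toLex (f (ofLex p).1, g (ofLex p).2)) fun p q h => by
    rcases Prod.Lex.lt_iff.mp h with h | ⟨h₁, h₂⟩
    · exact Prod.Lex.toLex_lt_toLex.mpr (Or.inl (f.strictMono h))
    · exact Prod.Lex.toLex_lt_toLex.mpr (Or.inr ⟨congrArg f h₁, g.strictMono h₂⟩)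

theorem nonempty_orderEmbedding_of_forall_mem_range {L A X : Type*} [LinearOrder L]
    [LinearOrder A] [Preorder X] {e : A → X} (he : StrictMono e) {φ : L → X}
    (hφ : StrictMono φ) (h : ∀ x, φ x ∈ range e) : Nonempty (L ↪o A) :=
  ⟨(OrderEmbedding.ofStrictMono (fun x => (⟨φ x, h x⟩ : range e)) fun _ _ hxy => hφ hxy).trans
    (he.orderIso e).symm.toOrderEmbedding⟩

theorem Monotone.exists_forall_eq_on_copy {L : Type*} [Preorder L] {φ : ℤ ×ₗ L → ℤ}
    (hφ : Monotone φ) (hbdd : BddAbove (range φ) ∨ BddBelow (range φ)) :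
    ∃ n c, ∀ x, φ (toLex (n, x)) = c := by
  by_contra! hne
  obtain ⟨a, -⟩ := hne 0 0
  -- `φ` is not constant on copy `2n+1`, so it strictly increases from `(2n, a)` to `(2n+2, a)`
  have hχ : StrictMono fun n => φ (toLex (2 * n, a)) := strictMono_int_of_lt_succ fun n => by
    have hle : ∀ y, φ (toLex (2 * n, a)) ≤ φ (toLex (2 * n + 1, y)) ∧
        φ (toLex (2 * n + 1, y)) ≤ φ (toLex (2 * (n + 1), a)) := fun y =>
      ⟨hφ (Prod.Lex.toLex_le_toLex.mpr (Or.inl (by omega))),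
        hφ (Prod.Lex.toLex_le_toLex.mpr (Or.inl (by omega)))⟩
    obtain ⟨x, hx⟩ := hne (2 * n + 1) (φ (toLex (2 * n + 1, a)))
    have := hle x
    have := hle a
    omega
  have hsub : range (fun n => φ (toLex (2 * n, a))) ⊆ range φ := range_comp_subset_range _ φ
  rcases hbdd with h | h
  · exact hχ.not_bddAbove_range_of_isSuccArchimedean (h.mono hsub)
  · exact hχ.not_bddBelow_range_of_isPredArchimedean (h.mono hsub)

@[elab_as_elim]
theorem Prod.Lex.sumLex_induction {α A B : Type*} {P : α ×ₗ (A ⊕ₗ B) → Prop}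
    (inl : ∀ m a, P (toLex (m, Sum.inlₗ a))) (inr : ∀ m b, P (toLex (m, Sum.inrₗ b)))
    (p : α ×ₗ (A ⊕ₗ B)) : P p := by
  obtain ⟨⟨m, s⟩, rfl⟩ := toLex.surjective p
  obtain ⟨a | b, rfl⟩ := toLex.surjective s
  exacts [inl m a, inr m b]

section blockIndex

variable {A B : Type*}

def blockIndex : ℤ ×ₗ (A ⊕ₗ B) → ℤ
  | (m, .inl _) => 2 * m
  | (m, .inr _) => 2 * m + 1

@[simp]
theorem blockIndex_inl (m : ℤ) (a : A) : blockIndex (toLex (m, Sum.inlₗ (β := B) a)) = 2 * m :=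
  rfl

@[simp]
theorem blockIndex_inr (m : ℤ) (b : B) :
    blockIndex (toLex (m, Sum.inrₗ (α := A) b)) = 2 * m + 1 :=
  rfl

theorem two_mul_fst_le_blockIndex (p : ℤ ×ₗ (A ⊕ₗ B)) : 2 * (ofLex p).1 ≤ blockIndex p := by
  induction p using Prod.Lex.sumLex_induction <;> simp

theorem blockIndex_le_two_mul_fst_add_one (p : ℤ ×ₗ (A ⊕ₗ B)) :
    blockIndex p ≤ 2 * (ofLex p).1 + 1 := by
  induction p using Prod.Lex.sumLex_induction <;> simp

theorem mem_range_inl_of_blockIndex_eq {p : ℤ ×ₗ (A ⊕ₗ B)} {m : ℤ} (h : blockIndex p = 2 * m) :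
    p ∈ range fun a : A => toLex (m, Sum.inlₗ (β := B) a) := by
  induction p using Prod.Lex.sumLex_induction <;> simp at h ⊢ <;> omega

theorem mem_range_inr_of_blockIndex_eq {p : ℤ ×ₗ (A ⊕ₗ B)} {m : ℤ}
    (h : blockIndex p = 2 * m + 1) :
    p ∈ range fun b : B => toLex (m, Sum.inrₗ (α := A) b) := by
  induction p using Prod.Lex.sumLex_induction <;> simp at h ⊢ <;> omega

theorem bddAbove_range_blockIndex_comp {ι : Type*} {g : ι → ℤ ×ₗ (A ⊕ₗ B)}
    (h : BddAbove (range fun i => (ofLex (g i)).1)) : BddAbove (range (blockIndex ∘ g)) := by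
  obtain ⟨M, hM⟩ := h
  refine ⟨2 * M + 1, ?_⟩
  rintro _ ⟨i, rfl⟩
  have := hM (mem_range_self i)
  have := blockIndex_le_two_mul_fst_add_one (g i)
  simp only [Function.comp_apply]
  omega

theorem bddBelow_range_blockIndex_comp {ι : Type*} {g : ι → ℤ ×ₗ (A ⊕ₗ B)}
    (h : BddBelow (range fun i => (ofLex (g i)).1)) : BddBelow (range (blockIndex ∘ g)) := by
  obtain ⟨M, hM⟩ := h
  refine ⟨2 * M, ?_⟩
  rintro _ ⟨i, rfl⟩
  have := hM (mem_range_self i)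
  have := two_mul_fst_le_blockIndex (g i)
  simp only [Function.comp_apply]
  omega

theorem blockIndex_mono [Preorder A] [Preorder B] :
    Monotone (blockIndex : ℤ ×ₗ (A ⊕ₗ B) → ℤ) := by
  intro p q
  induction p using Prod.Lex.sumLex_induction <;> induction q using Prod.Lex.sumLex_induction <;>
    simp [Prod.Lex.toLex_le_toLex] <;> omega

theorem nonempty_orderEmbedding_of_blockIndex_eq {L : Type*} [LinearOrder L] [LinearOrder A]
    [LinearOrder B] {φ : L → ℤ ×ₗ (A ⊕ₗ B)} (hφ : StrictMono φ) {c : ℤ}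
    (hc : ∀ x, blockIndex (φ x) = c) : Nonempty (L ↪o A) ∨ Nonempty (L ↪o B) := by
  obtain ⟨m, rfl | rfl⟩ := Int.even_or_odd' c
  · exact Or.inl <| nonempty_orderEmbedding_of_forall_mem_range
      ((Prod.Lex.strictMono_toLex_mk m).comp Sum.Lex.inl_strictMono) hφ
      fun x => mem_range_inl_of_blockIndex_eq (hc x)
  · exact Or.inr <| nonempty_orderEmbedding_of_forall_mem_range
      ((Prod.Lex.strictMono_toLex_mk m).comp Sum.Lex.inr_strictMono) hφ
      fun x => mem_range_inr_of_blockIndex_eq (hc x)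

end blockIndex

theorem IsIndecomposable.exists_orderEmbedding_bdd_fst {M C : Type} [LinearOrder M]
    [LinearOrder C] (hM : IsIndecomposable M) (f : M ↪o ℤ ×ₗ C) :
    ∃ g : M ↪o ℤ ×ₗ C, BddAbove (range fun x => (ofLex (g x)).1) ∨
      BddBelow (range fun x => (ofLex (g x)).1) := by
  let cutAfterZero : ℤ ×ₗ C ≃o Iic (0 : ℤ) ×ₗ C ⊕ₗ Ioi (0 : ℤ) ×ₗ C :=
    (Prod.Lex.prodLexCongr (OrderIso.sumLexIicIoi 0).symm (OrderIso.refl C)).trans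
      (Prod.Lex.sumLexProdLexDistrib _ _ _)
  obtain ⟨⟨g⟩⟩ | ⟨⟨g⟩⟩ := hM _ _ ⟨f.trans cutAfterZero.toOrderEmbedding⟩
  · refine ⟨g.trans ((OrderEmbedding.subtype _).prodLex (OrderIso.refl C).toOrderEmbedding),
      Or.inl ⟨0, ?_⟩⟩
    rintro _ ⟨x, rfl⟩
    exact (ofLex (g x)).1.2
  · refine ⟨g.trans ((OrderEmbedding.subtype _).prodLex (OrderIso.refl C).toOrderEmbedding),
      Or.inr ⟨0, ?_⟩⟩
    rintro _ ⟨x, rfl⟩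
    exact le_of_lt (ofLex (g x)).1.2

/-- If `L ×ₗ ℤ` (ℤ-many consecutive copies of `L`) is indecomposable,
then so is `L`. -/
theorem stmt_3 (L : Type) [LinearOrder L] (h : IsIndecomposable (ℤ ×ₗ L)) :
    IsIndecomposable L := by
  intro A B _ _ ⟨f⟩
  obtain ⟨g, hbdd⟩ :=
    h.exists_orderEmbedding_bdd_fst ((OrderIso.refl ℤ).toOrderEmbedding.prodLex f)
  obtain ⟨n, c, hc⟩ := (blockIndex_mono.comp g.monotone).exists_forall_eq_on_copy
    (hbdd.imp bddAbove_range_blockIndex_comp bddBelow_range_blockIndex_comp)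
  exact nonempty_orderEmbedding_of_blockIndex_eq
    (g.strictMono.comp (Prod.Lex.strictMono_toLex_mk n)) hc
end

section
/- For linear orders L₁, ..., Lₙ (n ≥ 1), there is an order isomorphism ω ×ₗ (L₁ + L₂ + ⋯ + Lₙ) ≅ L₁ + ω ×ₗ (L₂ + ⋯ + Lₙ + L₁), i.e., one may 'exude' the first summand out of an ω-indexed sum by cyclically permuting the summands. -/
/-!
With `M = L₁ + ⋯ + Lₙ`, both sides are the ω-sum of the sequence `L₀, M, L₀, M, …`, bracketed
as `(L₀ + M) + (L₀ + M) + ⋯` on the left and as `L₀ + (M + L₀) + (M + L₀) + ⋯` on the right.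
So it suffices to show `ω ×ₗ (A + B) ≅ A + ω ×ₗ (B + A)` for two linear orders: send the leading
`A` to the `A` of copy `0`, the `B` of copy `k` to the `B` of copy `k`, and the `A` of copy `k`
to the `A` of copy `k + 1`.
-/

namespace Prod.Lex

variable (A B : Type*)

def natSumLexAbsorb : A ⊕ₗ ℕ ×ₗ (B ⊕ₗ A) → ℕ ×ₗ (A ⊕ₗ B)
  | .inl a => toLex (0, toLex (.inl a))
  | .inr (k, .inl b) => toLex (k, toLex (.inr b))
  | .inr (k, .inr a) => toLex (k + 1, toLex (.inl a))

theorem natSumLexAbsorb_surjective : Function.Surjective (natSumLexAbsorb A B) := by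
  rintro ⟨_ | k, a | b⟩
  exacts [⟨.inl a, rfl⟩, ⟨.inr (0, .inl b), rfl⟩, ⟨.inr (k, .inr a), rfl⟩,
    ⟨.inr (k + 1, .inl b), rfl⟩]

variable [LinearOrder A] [LinearOrder B]

theorem natSumLexAbsorb_strictMono : StrictMono (natSumLexAbsorb A B) := by
  intro x y h
  change Sum.Lex (· < ·) (· < ·) x y at h
  rcases h with ⟨h⟩ | ⟨h⟩ | ⟨a, ⟨k, _ | _⟩⟩
  case inr =>
    change Prod.Lex (· < ·) (· < ·) _ _ at h
    rcases h with ⟨_ | _, _ | _, h⟩ | ⟨k, h⟩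
    case right =>
      change Sum.Lex (· < ·) (· < ·) _ _ at h
      rcases h with ⟨h⟩ | ⟨h⟩ | _ <;> simp [natSumLexAbsorb, toLex_lt_toLex, *]
    all_goals simp [natSumLexAbsorb, toLex_lt_toLex, h] <;> omega
  all_goals simp [natSumLexAbsorb, toLex_lt_toLex, *] <;> omega

noncomputable def natSumLexExude : ℕ ×ₗ (A ⊕ₗ B) ≃o A ⊕ₗ ℕ ×ₗ (B ⊕ₗ A) :=
  (StrictMono.orderIsoOfSurjective _ (natSumLexAbsorb_strictMono A B)
    (natSumLexAbsorb_surjective A B)).symm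

end Prod.Lex

namespace Sigma.Lex

variable {n : ℕ} (α : Fin (n + 1) → Type*)

def ofSumLexFinSucc : α 0 ⊕ₗ (Σₗ j : Fin n, α j.succ) → Σₗ i, α i
  | .inl a => toLex ⟨0, a⟩
  | .inr ⟨j, a⟩ => toLex ⟨j.succ, a⟩

def ofSumLexFinLast : (Σₗ j : Fin n, α j.castSucc) ⊕ₗ α (Fin.last n) → Σₗ i, α i
  | .inl ⟨j, a⟩ => toLex ⟨j.castSucc, a⟩
  | .inr a => toLex ⟨Fin.last n, a⟩

variable [∀ i, LinearOrder (α i)]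

theorem ofSumLexFinSucc_strictMono : StrictMono (ofSumLexFinSucc α) := by
  intro x y h
  change Sum.Lex (· < ·) (· < ·) x y at h
  rcases h with ⟨h⟩ | ⟨h⟩ | ⟨a, ⟨j, b⟩⟩
  · exact Sigma.Lex.right _ _ h
  · change Sigma.Lex (· < ·) (fun _ => (· < ·)) _ _ at h
    rcases h with ⟨_, _, h⟩ | ⟨_, _, h⟩
    · exact Sigma.Lex.left _ _ (Fin.succ_lt_succ_iff.mpr h)
    · exact Sigma.Lex.right _ _ h
  · exact Sigma.Lex.left _ _ j.succ_pos

theorem ofSumLexFinLast_strictMono : StrictMono (ofSumLexFinLast α) := by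
  intro x y h
  change Sum.Lex (· < ·) (· < ·) x y at h
  rcases h with ⟨h⟩ | ⟨h⟩ | ⟨⟨j, a⟩, b⟩
  · change Sigma.Lex (· < ·) (fun _ => (· < ·)) _ _ at h
    rcases h with ⟨_, _, h⟩ | ⟨_, _, h⟩
    · exact Sigma.Lex.left _ _ (Fin.castSucc_lt_castSucc_iff.mpr h)
    · exact Sigma.Lex.right _ _ h
  · exact Sigma.Lex.right _ _ h
  · exact Sigma.Lex.left _ _ j.castSucc_lt_last

noncomputable def finSuccOrderIso : (Σₗ i, α i) ≃o α 0 ⊕ₗ (Σₗ j : Fin n, α j.succ) :=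
  ((ofSumLexFinSucc_strictMono α).orderIsoOfSurjective _ <| by
    rintro ⟨i, a⟩
    induction i using Fin.cases with
    | zero => exact ⟨.inl a, rfl⟩
    | succ j => exact ⟨.inr ⟨j, a⟩, rfl⟩).symm

noncomputable def finLastOrderIso :
    (Σₗ i, α i) ≃o (Σₗ j : Fin n, α j.castSucc) ⊕ₗ α (Fin.last n) :=
  ((ofSumLexFinLast_strictMono α).orderIsoOfSurjective _ <| by
    rintro ⟨i, a⟩
    induction i using Fin.lastCases with
    | last => exact ⟨.inr a, rfl⟩
    | cast j => exact ⟨.inl ⟨j, a⟩, rfl⟩).symm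

theorem nonempty_orderIso_rotate :
    Nonempty ((Σₗ i : Fin (n + 1), α (i + 1)) ≃o (Σₗ j : Fin n, α j.succ) ⊕ₗ α 0) := by
  -- `castSucc j + 1 = succ j` and `last n + 1 = 0` are not definitional; generalizing the
  -- right-hand indices lets us substitute instead of casting between fibres.
  have key : ∀ (g : Fin n → Fin (n + 1)) (c : Fin (n + 1)), (∀ j, j.castSucc + 1 = g j) →
      Fin.last n + 1 = c → Nonempty ((Σₗ i, α (i + 1)) ≃o (Σₗ j, α (g j)) ⊕ₗ α c) := by
    rintro g c hg rfl
    obtain rfl := funext hg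
    exact ⟨finLastOrderIso fun i => α (i + 1)⟩
  exact key _ _ (fun _ => Fin.coeSucc_eq_succ) (Fin.last_add_one n)

end Sigma.Lex

/-- Exuding the first summand out of an ω-sum:
`ω ×ₗ (L₀ + ⋯ + Lₙ) ≅ L₀ + ω ×ₗ (L₁ + ⋯ + Lₙ + L₀)`. -/
theorem stmt_5 (n : ℕ) (L : Fin (n + 1) → Type) [∀ i, LinearOrder (L i)] :
    Nonempty ((ℕ ×ₗ (Σₗ i, L i)) ≃o ((L 0) ⊕ₗ (ℕ ×ₗ (Σₗ i : Fin (n + 1), L (i + 1))))) := by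
  obtain ⟨rotate⟩ := Sigma.Lex.nonempty_orderIso_rotate L
  exact ⟨(Prod.Lex.prodLexCongr (.refl ℕ) (Sigma.Lex.finSuccOrderIso L)).trans <|
    (Prod.Lex.natSumLexExude _ _).trans <|
      OrderIso.sumLexCongr (.refl _) (Prod.Lex.prodLexCongr (.refl ℕ) rotate.symm)⟩
end

section
/- For linear orders L₁, ..., Lₙ (n ≥ 1), there is an order isomorphism ω* ×ₗ (L₁ + ⋯ + Lₙ) ≅ ω* ×ₗ (Lₙ + L₁ + ⋯ + L_{n-1}) + Lₙ, i.e., the last summand can be exuded to the right of an ω*-indexed sum. -/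
/-!
Write `A = L₀ + ⋯ + L_{n-1}` and `B = Lₙ`, so that `ω* ×ₗ (L₀ + ⋯ + Lₙ)` is the ω*-indexed sum
`⋯ + (A + B) + (A + B)`. Regrouping each `B` with the `A` to its right gives
`⋯ + (B + A) + (B + A) + B`, i.e. `ω* ×ₗ (B + A) + B`; and `B + A` is the rotated sum
`Lₙ + L₀ + ⋯ + L_{n-1}`.
-/

open OrderDual

namespace Fin

lemma zero_sub_one_eq_last (n : ℕ) : (0 : Fin (n + 1)) - 1 = last n := by
  ext; simp

lemma succ_sub_one_eq_castSucc {n : ℕ} (i : Fin n) : i.succ - 1 = i.castSucc := by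
  ext; simp [coe_sub_one, succ_ne_zero]

end Fin

namespace OrderIso

protected def cast {ι : Type*} {α : ι → Type*} [∀ i, LE (α i)] {i j : ι} (h : i = j) :
    α i ≃o α j where
  toEquiv := Equiv.cast (congrArg _ h)
  map_rel_iff' := by cases h; rfl

def sigmaLexCongrRight {ι : Type*} [LinearOrder ι] {α β : ι → Type*} [∀ i, LinearOrder (α i)]
    [∀ i, Preorder (β i)] (e : ∀ i, α i ≃o β i) : (Σₗ i, α i) ≃o Σₗ i, β i where
  toEquiv := Equiv.sigmaCongrRight fun i ↦ (e i).toEquiv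
  map_rel_iff' := StrictMono.le_iff_le <| by
    rintro _ _ (⟨a, b, hij⟩ | ⟨a, b, hab⟩ : Sigma.Lex _ _ _ _)
    · exact Sigma.Lex.left _ _ hij
    · exact Sigma.Lex.right _ _ ((e _).strictMono hab)

section Fin

variable {n : ℕ} (α : Fin (n + 1) → Type*) [∀ i, LinearOrder (α i)]

noncomputable def sigmaLexFinSuccLast :
    (Σₗ i : Fin (n + 1), α i) ≃o (Σₗ i : Fin n, α i.castSucc) ⊕ₗ α (Fin.last n) :=
  let f : (Σₗ i : Fin n, α i.castSucc) ⊕ₗ α (Fin.last n) → Σₗ i, α i :=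
    fun x ↦ toLex (Sum.elim (fun p ↦ ⟨p.1.castSucc, p.2⟩) (fun a ↦ ⟨Fin.last n, a⟩) (ofLex x))
  have hf : StrictMono f := by
    rintro (⟨i, a⟩ | a) (⟨j, b⟩ | b) h
    · rcases (Sum.Lex.inl_lt_inl_iff.1 h : Sigma.Lex _ _ _ _) with ⟨a, b, hij⟩ | ⟨a, b, hab⟩
      · exact Sigma.Lex.left _ _ (Fin.castSucc_lt_castSucc_iff.2 hij)
      · exact Sigma.Lex.right _ _ hab
    · exact Sigma.Lex.left _ _ (Fin.castSucc_lt_last i)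
    · exact absurd h Sum.Lex.not_inr_lt_inl
    · exact Sigma.Lex.right _ _ (Sum.Lex.inr_lt_inr_iff.1 h)
  have hsurj : Function.Surjective f := by
    rintro ⟨i, a⟩
    induction i using Fin.lastCases with
    | last => exact ⟨toLex (.inr a), rfl⟩
    | cast i => exact ⟨toLex (.inl ⟨i, a⟩), rfl⟩
  (hf.orderIsoOfSurjective f hsurj).symm

noncomputable def sigmaLexFinSucc :
    (Σₗ i : Fin (n + 1), α i) ≃o α 0 ⊕ₗ Σₗ i : Fin n, α i.succ :=
  let f : α 0 ⊕ₗ (Σₗ i : Fin n, α i.succ) → Σₗ i, α i :=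
    fun x ↦ toLex (Sum.elim (fun a ↦ ⟨0, a⟩) (fun p ↦ ⟨p.1.succ, p.2⟩) (ofLex x))
  have hf : StrictMono f := by
    rintro (a | ⟨i, a⟩) (b | ⟨j, b⟩) h
    · exact Sigma.Lex.right _ _ (Sum.Lex.inl_lt_inl_iff.1 h)
    · exact Sigma.Lex.left _ _ (Fin.succ_pos j)
    · exact absurd h Sum.Lex.not_inr_lt_inl
    · rcases (Sum.Lex.inr_lt_inr_iff.1 h : Sigma.Lex _ _ _ _) with ⟨a, b, hij⟩ | ⟨a, b, hab⟩
      · exact Sigma.Lex.left _ _ (Fin.succ_lt_succ_iff.2 hij)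
      · exact Sigma.Lex.right _ _ hab
  have hsurj : Function.Surjective f := by
    rintro ⟨i, a⟩
    induction i using Fin.cases with
    | zero => exact ⟨toLex (.inl a), rfl⟩
    | succ i => exact ⟨toLex (.inr ⟨i, a⟩), rfl⟩
  (hf.orderIsoOfSurjective f hsurj).symm

end Fin

noncomputable def natDualProdLexSumLex (α β : Type*) [LinearOrder α] [LinearOrder β] :
    ℕᵒᵈ ×ₗ (α ⊕ₗ β) ≃o (ℕᵒᵈ ×ₗ (β ⊕ₗ α)) ⊕ₗ β :=
  -- the inverse: copy `k` of `B + A` goes to the `B` of copy `k + 1` and the `A` of copy `k`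
  let f : (ℕᵒᵈ ×ₗ (β ⊕ₗ α)) ⊕ₗ β → ℕᵒᵈ ×ₗ (α ⊕ₗ β) := fun x ↦
    Sum.elim
      (fun p ↦ Sum.elim (fun b ↦ toLex (toDual (ofDual (ofLex p).1 + 1), toLex (.inr b)))
        (fun a ↦ toLex ((ofLex p).1, toLex (.inl a))) (ofLex (ofLex p).2))
      (fun b ↦ toLex (toDual 0, toLex (.inr b))) (ofLex x)
  have hf : StrictMono f := by
    simp only [StrictMono, Lex.forall, Sum.forall, Prod.forall, OrderDual.forall]
    simp [f, Prod.Lex.toLex_lt_toLex, -toDual_add, -toDual_zero]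
    grind
  have hsurj : Function.Surjective f := by
    simp only [Function.Surjective, Lex.forall, Sum.forall, Prod.forall, OrderDual.forall]
    refine fun k ↦ ⟨fun a ↦ ⟨toLex (.inl (toLex (toDual k, toLex (.inr a)))), rfl⟩, fun b ↦ ?_⟩
    cases k with
    | zero => exact ⟨toLex (.inr b), rfl⟩
    | succ k => exact ⟨toLex (.inl (toLex (toDual k, toLex (.inl b)))), rfl⟩
  (hf.orderIsoOfSurjective f hsurj).symm

end OrderIso

/-- Exuding the last summand to the right of an ω*-sum:
`ω* ×ₗ (L₀ + ⋯ + Lₙ) ≅ ω* ×ₗ (Lₙ + L₀ + ⋯ + L_{n-1}) + Lₙ`. -/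
theorem stmt_6 (n : ℕ) (L : Fin (n + 1) → Type) [∀ i, LinearOrder (L i)] :
    Nonempty ((ℕᵒᵈ ×ₗ (Σₗ i, L i)) ≃o
      ((ℕᵒᵈ ×ₗ (Σₗ i : Fin (n + 1), L (i - 1))) ⊕ₗ (L (Fin.last n)))) := by
  let rotated : L (Fin.last n) ⊕ₗ (Σₗ i : Fin n, L i.castSucc) ≃o Σₗ i : Fin (n + 1), L (i - 1) :=
    (OrderIso.sumLexCongr (.cast (Fin.zero_sub_one_eq_last n).symm)
      (.sigmaLexCongrRight fun i ↦ .cast (Fin.succ_sub_one_eq_castSucc i).symm)).trans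
      (OrderIso.sigmaLexFinSucc fun i ↦ L (i - 1)).symm
  exact ⟨(Prod.Lex.prodLexCongr (.refl _) (OrderIso.sigmaLexFinSuccLast L)).trans <|
    (OrderIso.natDualProdLexSumLex _ _).trans <|
      OrderIso.sumLexCongr (Prod.Lex.prodLexCongr (.refl _) rotated) (.refl _)⟩
end

section
/- A linear order L is scattered (ℚ does not order-embed into L) if and only if its Hausdorff rank is an ordinal (i.e., L^(α) is finite for some ordinal α). -/
/-!
A copy of `ℚ` inside one `∼_α`-class is impossible: by induction on `α`, if `x ∼_α y` via
`β < α`, then by pigeonhole two rationals of a copy of `ℚ` in `[x, y]` fall into the same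
`∼_β`-class, and the rationals between them form a copy of `ℚ` inside that class. Hence if
`L^(α)` is finite, `ℚ` does not embed into `L`.

Conversely, the relations `∼_α` increase with `α` and are subsets of the set `L × L`, so they
stabilise: `∼_(α+1) = ∼_α` for some `α`. Then between two distinct `∼_α`-classes there are
infinitely many others, so if `L^(α)` is infinite it is a dense linear order with two points,
and representatives of its classes carry a copy of `ℚ`.
-/

/-- The Hausdorff equivalence relations `∼_α`, defined by transfinite recursion:
`∼₀` is equality, and `x ∼_α y` iff for some `β < α` only finitely many
`∼_β`-classes meet the closed interval between `x` and `y`. -/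
noncomputable def simRel (L : Type) [LinearOrder L] : Ordinal → L → L → Prop
  | α => fun x y => x = y ∨ ∃ β, ∃ _ : β < α,
      Set.Finite ((fun z => {w | simRel L β z w}) '' Set.uIcc x y)
  termination_by α => α

open Set

theorem Set.Finite.image_of_factors {α β γ : Type*} {f : α → β} {g : α → γ} {s : Set α}
    (hfg : ∀ x ∈ s, ∀ y ∈ s, f x = f y → g x = g y) (hf : (f '' s).Finite) :
    (g '' s).Finite := by
  rcases s.eq_empty_or_nonempty with rfl | ⟨x₀, -⟩
  · simp
  have : Nonempty α := ⟨x₀⟩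
  refine hf.of_surjOn (g ∘ Function.invFunOn f s) ?_
  rintro _ ⟨x, hx, rfl⟩
  have hfx : ∃ y ∈ s, f y = f x := ⟨x, hx, rfl⟩
  exact ⟨f x, mem_image_of_mem f hx,
    hfg _ (Function.invFunOn_mem hfx) _ hx (Function.invFunOn_eq hfx)⟩

theorem OrderEmbedding.exists_rat_embedding_Icc {L : Type*} [Preorder L] (f : ℚ ↪o L)
    {a b : ℚ} (hab : a < b) : ∃ g : ℚ ↪o L, ∀ q, g q ∈ Icc (f a) (f b) := by
  have : Infinite (Ioo a b) := Ioo.infinite hab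
  obtain ⟨e⟩ := Order.embedding_from_countable_to_dense ℚ (Ioo a b)
  refine ⟨(e.trans (OrderEmbedding.subtype _)).trans f, fun q => ?_⟩
  exact ⟨f.monotone (e q).2.1.le, f.monotone (e q).2.2.le⟩

/-- `range (simClass L α)` is the paper's `L^(α)`. -/
def simClass (L : Type) [LinearOrder L] (α : Ordinal) (z : L) : Set L :=
  {w | simRel L α z w}

section simRel

variable {L : Type} [LinearOrder L]

theorem simRel_iff {α : Ordinal} {x y : L} :
    simRel L α x y ↔ x = y ∨ ∃ β < α, (simClass L β '' uIcc x y).Finite := by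
  rw [simRel]
  simp only [exists_prop]
  rfl

theorem simRel_refl (α : Ordinal) (x : L) : simRel L α x x :=
  simRel_iff.2 (Or.inl rfl)

theorem simRel_symm {α : Ordinal} {x y : L} (h : simRel L α x y) : simRel L α y x := by
  rw [simRel_iff] at h ⊢
  rw [uIcc_comm]
  exact h.imp Eq.symm id

theorem simRel_mono {β α : Ordinal} (hβα : β ≤ α) {x y : L} (h : simRel L β x y) :
    simRel L α x y := by
  rw [simRel_iff] at *
  exact h.imp_right fun ⟨γ, hγ, hfin⟩ => ⟨γ, hγ.trans_le hβα, hfin⟩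

theorem simRel_of_mem_uIcc {α : Ordinal} {x y z : L} (h : simRel L α x y) (hz : z ∈ uIcc x y) :
    simRel L α x z := by
  rw [simRel_iff] at *
  rcases h with rfl | ⟨β, hβ, hfin⟩
  · rw [uIcc_self, mem_singleton_iff] at hz
    exact Or.inl hz.symm
  · exact Or.inr ⟨β, hβ, hfin.subset (image_mono (uIcc_subset_uIcc left_mem_uIcc hz))⟩

theorem simRel_trans (α : Ordinal) {x y z : L} (hxy : simRel L α x y) (hyz : simRel L α y z) :
    simRel L α x z := by
  induction α using WellFoundedLT.induction generalizing x y z with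
  | _ α IH =>
  -- Each `∼_β`-class lies in a `∼_γ`-class, by the induction hypothesis at `γ`.
  have coarsen : ∀ {β γ}, β ≤ γ → γ < α → ∀ s : Set L,
      (simClass L β '' s).Finite → (simClass L γ '' s).Finite := by
    intro β γ hβγ hγ s hfin
    refine hfin.image_of_factors fun u _ v _ huv => ?_
    have hv : simRel L γ u v := simRel_mono hβγ (huv ▸ simRel_refl β v : v ∈ simClass L β u)
    ext w
    exact ⟨IH γ hγ (simRel_symm hv), IH γ hγ hv⟩
  rw [simRel_iff] at *
  rcases hxy with rfl | ⟨β₁, hβ₁, h₁⟩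
  · exact hyz
  rcases hyz with rfl | ⟨β₂, hβ₂, h₂⟩
  · exact Or.inr ⟨β₁, hβ₁, h₁⟩
  have hmax : max β₁ β₂ < α := max_lt hβ₁ hβ₂
  refine Or.inr ⟨max β₁ β₂, hmax, ?_⟩
  refine ((coarsen (le_max_left _ _) hmax _ h₁).union
    (coarsen (le_max_right _ _) hmax _ h₂)).subset ?_
  rw [← image_union]
  exact image_mono uIcc_subset_uIcc_union_uIcc

theorem simClass_eq_iff {α : Ordinal} {x y : L} :
    simClass L α x = simClass L α y ↔ simRel L α x y := by
  refine ⟨fun h => (h ▸ simRel_refl α y : y ∈ simClass L α x), fun h => ?_⟩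
  ext w
  exact ⟨simRel_trans α (simRel_symm h), simRel_trans α h⟩

def simSetoid (L : Type) [LinearOrder L] (α : Ordinal) : Setoid L where
  r := simRel L α
  iseqv := ⟨simRel_refl α, simRel_symm, simRel_trans α⟩

end simRel

section scattered

variable {L : Type} [LinearOrder L]

theorem exists_simRel_rat_embedding_of_finite {β : Ordinal} (f : ℚ ↪o L) {S : Set (Set L)}
    (hS : S.Finite) (hfS : ∀ q, simClass L β (f q) ∈ S) :
    ∃ x y, simRel L β x y ∧ ∃ g : ℚ ↪o L, ∀ q, g q ∈ uIcc x y := by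
  obtain ⟨a, -, b, -, hab, heq⟩ :=
    infinite_univ.exists_lt_map_eq_of_mapsTo (fun q _ => hfS q) hS
  obtain ⟨g, hg⟩ := f.exists_rat_embedding_Icc hab
  exact ⟨f a, f b, simClass_eq_iff.1 heq, g, fun q => Icc_subset_uIcc (hg q)⟩

theorem not_forall_rat_embedding_mem_uIcc_of_simRel (α : Ordinal) {x y : L}
    (hxy : simRel L α x y) (g : ℚ ↪o L) : ¬ ∀ q, g q ∈ uIcc x y := by
  induction α using WellFoundedLT.induction generalizing x y g with
  | _ α IH =>
  intro hg
  rcases simRel_iff.1 hxy with rfl | ⟨β, hβ, hfin⟩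
  · have h₀ := hg 0
    have h₁ := hg 1
    rw [uIcc_self, mem_singleton_iff] at h₀ h₁
    exact zero_ne_one (g.injective (h₀.trans h₁.symm))
  · obtain ⟨u, v, huv, g', hg'⟩ :=
      exists_simRel_rat_embedding_of_finite g hfin fun q => mem_image_of_mem _ (hg q)
    exact IH β hβ huv g' hg'

theorem not_nonempty_rat_embedding_of_finite_simClass {α : Ordinal}
    (h : (range (simClass L α)).Finite) : ¬ Nonempty (ℚ ↪o L) := by
  rintro ⟨f⟩
  obtain ⟨x, y, hxy, g, hg⟩ :=
    exists_simRel_rat_embedding_of_finite f h fun q => mem_range_self (f q)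
  exact not_forall_rat_embedding_mem_uIcc_of_simRel α hxy g hg

end scattered

/-- The classes form a dense linear order; a set of representatives carries the copy of `ℚ`. -/
theorem Setoid.nonempty_rat_embedding {L : Type*} [LinearOrder L] (s : Setoid L)
    (hconv : ∀ ⦃x y z⦄, x ≤ y → y ≤ z → s x z → s x y)
    (hdense : ∀ ⦃x y⦄, x < y → ¬ s x y → ∃ z, x < z ∧ z < y ∧ ¬ s x z ∧ ¬ s z y)
    (hnt : ∃ x y, ¬ s x y) : Nonempty (ℚ ↪o L) := by
  set rep : L → L := fun x => (Quotient.mk s x).out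
  have rep_rel (x : L) : s (rep x) x := Quotient.mk_out x
  have rep_eq {x y : L} (h : s x y) : rep x = rep y := by
    simp only [rep, Quotient.sound h]
  have eq_of_rel {u v : L} (hu : u ∈ range rep) (hv : v ∈ range rep) (h : s u v) : u = v := by
    obtain ⟨⟨x, rfl⟩, ⟨y, rfl⟩⟩ := And.intro hu hv
    exact rep_eq (s.trans (s.symm (rep_rel x)) (s.trans h (rep_rel y)))
  have : Nontrivial (range rep) := by
    obtain ⟨x, y, hxy⟩ := hnt
    refine ⟨⟨rep x, mem_range_self x⟩, ⟨rep y, mem_range_self y⟩, fun h => hxy ?_⟩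
    have h' : rep x = rep y := congrArg Subtype.val h
    exact s.trans (s.symm (rep_rel x)) (h' ▸ rep_rel y)
  have : DenselyOrdered (range rep) := by
    constructor
    rintro ⟨u, hu⟩ ⟨v, hv⟩ (huv : u < v)
    obtain ⟨z, huz, hzv, hnuz, hnzv⟩ := hdense huv fun h => huv.ne (eq_of_rel hu hv h)
    refine ⟨⟨rep z, mem_range_self z⟩, show u < rep z from ?_, show rep z < v from ?_⟩
    · by_contra! hle
      exact hnuz (s.trans (s.symm (hconv hle huz.le (rep_rel z))) (rep_rel z))
    · by_contra! hle
      exact hnzv (hconv hzv.le hle (s.symm (rep_rel z)))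
  obtain ⟨e⟩ := Order.embedding_from_countable_to_dense ℚ (range rep)
  exact ⟨e.trans (OrderEmbedding.subtype _)⟩

section rank

universe u

variable {L : Type} [LinearOrder L]

variable (L) in
theorem exists_simRel_succ_imp_simRel :
    ∃ α : Ordinal.{u}, ∀ x y : L, simRel L (Order.succ α) x y → simRel L α x y := by
  obtain ⟨β, γ, hne, heq⟩ : ∃ β γ : Ordinal.{u}, β ≠ γ ∧
      {p : L × L | simRel L β p.1 p.2} = {p : L × L | simRel L γ p.1 p.2} := by
    by_contra! h
    exact not_injective_of_ordinal (fun α : Ordinal.{u} => {p : L × L | simRel L α p.1 p.2})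
      fun β γ hβγ => by_contra fun hne => h β γ hne hβγ
  wlog hlt : β < γ generalizing β γ
  · exact this γ β hne.symm heq.symm (hne.lt_or_gt.resolve_left hlt)
  refine ⟨β, fun x y h => ?_⟩
  have hγ : (x, y) ∈ {p : L × L | simRel L γ p.1 p.2} :=
    simRel_mono (Order.succ_le_of_lt hlt) h
  rwa [← heq] at hγ

theorem finite_simClass_of_simRel_succ {α : Ordinal}
    (hα : ∀ x y : L, simRel L (Order.succ α) x y → simRel L α x y)
    (hs : ¬ Nonempty (ℚ ↪o L)) : (range (simClass L α)).Finite := by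
  by_contra hinf
  refine hs ((simSetoid L α).nonempty_rat_embedding ?_ ?_ ?_)
  · intro x y z hxy hyz hxz
    exact simRel_of_mem_uIcc hxz (Icc_subset_uIcc ⟨hxy, hyz⟩)
  · intro x y hxy hnxy
    have hinf : (simClass L α '' uIcc x y).Infinite := fun hfin =>
      hnxy (hα x y (simRel_iff.2 (Or.inr ⟨α, Order.lt_succ α, hfin⟩)))
    obtain ⟨_, ⟨z, hz, rfl⟩, hzxy⟩ :=
      (hinf.sdiff (toFinite {simClass L α x, simClass L α y})).nonempty
    simp only [mem_insert_iff, mem_singleton_iff, simClass_eq_iff, not_or] at hzxy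
    rw [uIcc_of_le hxy.le] at hz
    refine ⟨z, hz.1.lt_of_ne ?_, hz.2.lt_of_ne ?_, fun h => hzxy.1 (simRel_symm h), hzxy.2⟩
    · rintro rfl
      exact hzxy.1 (simRel_refl α x)
    · rintro rfl
      exact hzxy.2 (simRel_refl α z)
  · obtain ⟨_, ⟨x, rfl⟩, _, ⟨y, rfl⟩, hxy⟩ := (Set.not_finite.1 hinf).nontrivial
    exact ⟨x, y, fun h => hxy (simClass_eq_iff.2 h)⟩

end rank

/-- A linear order `L` is scattered (`ℚ` does not embed into `L`) iff its
Hausdorff rank is an ordinal, i.e. `L^(α)` is finite (the relation `∼_α` has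
finitely many classes) for some ordinal `α`. -/
theorem stmt_7 (L : Type) [LinearOrder L] :
    (¬ Nonempty (ℚ ↪o L)) ↔
      ∃ α : Ordinal, Set.Finite (Set.range fun z : L => {w | simRel L α z w}) := by
  refine ⟨fun hs => ?_, fun ⟨α, hα⟩ => not_nonempty_rat_embedding_of_finite_simClass hα⟩
  obtain ⟨α, hα⟩ := exists_simRel_succ_imp_simRel L
  exact ⟨α, finite_simClass_of_simRel_succ hα hs⟩
end

section
/- Let L₁, L₂ be linear orders and L = L₁ + L₂. If either L₁ has no maximum element or L₂ has no minimum element, then the first Hausdorff derivative satisfies L^(1) ≅ L₁^(1) + L₂^(1). If L₁ has a maximum and L₂ has a minimum, then L^(1) is obtained from L₁^(1) + L₂^(1) by identifying the maximum of L₁^(1) with the minimum of L₂^(1). -/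
section HausdorffDerivative

variable {M : Type} [LinearOrder M]

/-- `x ∼₁ y` iff the closed interval between `x` and `y` is finite. -/
def sim1 (x y : M) : Prop := (Set.uIcc x y).Finite

theorem sim1_refl (x : M) : sim1 x x := by simp [sim1]

theorem sim1_symm {x y : M} (h : sim1 x y) : sim1 y x := by
  rwa [sim1, Set.uIcc_comm]

theorem sim1_trans {x y z : M} (h1 : sim1 x y) (h2 : sim1 y z) : sim1 x z :=
  Set.Finite.subset (h1.union h2) (Set.uIcc_subset_uIcc_union_uIcc)

/-- The setoid of `∼₁`-equivalence. -/
def sim1Setoid (M : Type) [LinearOrder M] : Setoid M :=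
  ⟨sim1, ⟨sim1_refl, sim1_symm, sim1_trans⟩⟩

/-- The first Hausdorff derivative `M^(1)`: the linear order of `∼₁`-classes. -/
def HDeriv (M : Type) [LinearOrder M] : Type := Quotient (sim1Setoid M)

theorem sim1_le_congr {x x' y y' : M} (hx : sim1 x x') (hy : sim1 y y')
    (h : x ≤ y ∨ sim1 x y) : x' ≤ y' ∨ sim1 x' y' := by
  by_cases hxy' : sim1 x' y'
  · exact Or.inr hxy'
  rcases h with h | h
  · left
    by_contra hlt
    push_neg at hlt
    apply hxy' (sim1_symm _)
    have hsub : Set.uIcc y' x' ⊆ Set.uIcc y' y ∪ Set.uIcc x x' := by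
      intro z hz
      rw [Set.uIcc_of_le hlt.le, Set.mem_Icc] at hz
      rcases le_or_gt z y with hzy | hzy
      · exact Or.inl (Set.mem_uIcc.2 (Or.inl ⟨hz.1, hzy⟩))
      · exact Or.inr (Set.mem_uIcc.2 (Or.inl ⟨(h.trans hzy.le), hz.2⟩))
    exact Set.Finite.subset ((sim1_symm hy).union hx) hsub
  · exact absurd (sim1_trans (sim1_trans (sim1_symm hx) h) hy) hxy'

/-- The induced order on `∼₁`-classes. -/
def HDeriv.le : HDeriv M → HDeriv M → Prop :=
  Quotient.lift₂ (fun x y => x ≤ y ∨ sim1 x y)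
    (fun _ _ _ _ ha hb => propext
      ⟨sim1_le_congr ha hb, sim1_le_congr (sim1_symm ha) (sim1_symm hb)⟩)

noncomputable instance HDeriv.instLinearOrder : LinearOrder (HDeriv M) where
  le := HDeriv.le
  le_refl := by rintro ⟨x⟩; exact Or.inl le_rfl
  le_trans := by
    rintro ⟨x⟩ ⟨y⟩ ⟨z⟩ (h1 | h1) (h2 | h2)
    · exact Or.inl (h1.trans h2)
    · rcases le_or_gt x z with h | h
      · exact Or.inl h
      · exact Or.inr (sim1_symm (Set.Finite.subset h2
          (by rw [Set.uIcc_of_le h.le, Set.uIcc_of_ge (h.le.trans h1)]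
              exact Set.Icc_subset_Icc le_rfl h1)))
    · rcases le_or_gt x z with h | h
      · exact Or.inl h
      · exact Or.inr (Set.Finite.subset h1
          (by rw [Set.uIcc_of_ge h.le, Set.uIcc_of_ge (h2.trans h.le)]
              exact Set.Icc_subset_Icc h2 le_rfl))
    · exact Or.inr (sim1_trans h1 h2)
  le_antisymm := by
    rintro ⟨x⟩ ⟨y⟩ (h1 | h1) (h2 | h2)
    · exact Quotient.sound (le_antisymm h1 h2 ▸ sim1_refl x)
    · exact Quotient.sound (sim1_symm h2)
    · exact Quotient.sound h1
    · exact Quotient.sound h1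
  le_total := by
    rintro ⟨x⟩ ⟨y⟩
    rcases le_total x y with h | h
    · exact Or.inl (Or.inl h)
    · exact Or.inr (Or.inl h)
  toDecidableLE := Classical.decRel _

end HausdorffDerivative

/-!
Both summands are convex in `L₁ + L₂`, so on each of them `∼₁` is the relation of the summand
itself. A class can only straddle the two summands if `inl x ∼₁ inr y`, i.e. if `[x, ∞)` is finite
in `L₁` and `(-∞, y]` is finite in `L₂`. This forces a maximum of `L₁` and a minimum of `L₂`, and
then it happens exactly when `x` lies in the last class of `L₁` and `y` in the first class of `L₂`,
which are merged.
-/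

open Set Function Sum

section Sim1

variable {M : Type} [LinearOrder M]

theorem sim1_comm {x y : M} : sim1 x y ↔ sim1 y x := ⟨sim1_symm, sim1_symm⟩

theorem sim1_iff_finite_Icc {x y : M} (h : x ≤ y) : sim1 x y ↔ (Icc x y).Finite := by
  rw [sim1, uIcc_of_le h]

theorem sim1_map_iff {N : Type} [LinearOrder N] (e : M ↪o N) (he : (range e).OrdConnected)
    {x y : M} : sim1 (e x) (e y) ↔ sim1 x y := by
  wlog hxy : x ≤ y generalizing x y
  · exact sim1_comm.trans ((this (le_of_not_ge hxy)).trans sim1_comm)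
  rw [sim1_iff_finite_Icc hxy, sim1_iff_finite_Icc (e.monotone hxy), ← e.image_Icc he,
    finite_image_iff e.injective.injOn]

theorem exists_forall_le_of_finite_Ici {x : M} (h : (Ici x).Finite) : ∃ a : M, ∀ z, z ≤ a := by
  obtain ⟨a, hxa, ha⟩ := exists_max_image (Ici x) id h ⟨x, le_rfl⟩
  exact ⟨a, fun z => (le_total z x).elim (fun hz => hz.trans hxa) (ha z)⟩

theorem exists_forall_ge_of_finite_Iic {y : M} (h : (Iic y).Finite) : ∃ b : M, ∀ z, b ≤ z := by
  obtain ⟨b, hby, hb⟩ := exists_min_image (Iic y) id h ⟨y, le_rfl⟩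
  exact ⟨b, fun z => (le_total y z).elim hby.trans (hb z)⟩

end Sim1

namespace HDeriv

variable {M : Type} [LinearOrder M]

abbrev mk (x : M) : HDeriv M := Quotient.mk (sim1Setoid M) x

theorem mk_surjective : Surjective (mk : M → HDeriv M) := Quotient.exists_rep

theorem mk_le_mk {x y : M} : mk x ≤ mk y ↔ x ≤ y ∨ sim1 x y := Iff.rfl

theorem mk_eq_mk {x y : M} : mk x = mk y ↔ sim1 x y := Quotient.eq

theorem mk_monotone : Monotone (mk : M → HDeriv M) := fun _ _ h => Or.inl h

instance [OrderTop M] : OrderTop (HDeriv M) where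
  top := mk ⊤
  le_top a := Quotient.inductionOn a fun _ => mk_monotone le_top

instance [OrderBot M] : OrderBot (HDeriv M) where
  bot := mk ⊥
  bot_le a := Quotient.inductionOn a fun _ => mk_monotone bot_le

theorem mk_eq_top_iff [OrderTop M] {x : M} : mk x = ⊤ ↔ (Ici x).Finite := by
  rw [← Icc_top, ← sim1_iff_finite_Icc le_top]
  exact mk_eq_mk

theorem isMin_mk_iff [OrderBot M] {y : M} : IsMin (mk y) ↔ (Iic y).Finite := by
  rw [isMin_iff_eq_bot, ← Icc_bot, ← sim1_iff_finite_Icc bot_le, sim1_comm]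
  exact mk_eq_mk

noncomputable def orderIsoOfSurjective {N : Type} [PartialOrder N] (f : M → N)
    (hf : Surjective f) (h : ∀ x y, f x ≤ f y ↔ mk x ≤ mk y) : HDeriv M ≃o N :=
  OrderIso.ofSurjective
    (OrderEmbedding.ofMapLEIff
      (Quotient.lift f fun x y hxy =>
        le_antisymm ((h x y).2 (Or.inr hxy)) ((h y x).2 (Or.inr (sim1_symm hxy))))
      (by rintro ⟨x⟩ ⟨y⟩; exact h x y))
    ((Quotient.lift_surjective_iff _ _).2 hf)

end HDeriv

section SumLex

variable {α β : Type} [LinearOrder α] [LinearOrder β]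

theorem isLowerSet_range_inlₗ : IsLowerSet (range (inlₗ : α → α ⊕ₗ β)) := by
  rintro _ (b | b) hba ⟨a, rfl⟩
  · exact ⟨b, rfl⟩
  · exact absurd hba Sum.Lex.not_inr_le_inl

theorem isUpperSet_range_inrₗ : IsUpperSet (range (inrₗ : β → α ⊕ₗ β)) := by
  rintro _ (b | b) hab ⟨a, rfl⟩
  · exact absurd hab Sum.Lex.not_inr_le_inl
  · exact ⟨b, rfl⟩

theorem sim1_inlₗ_inlₗ {x y : α} : sim1 (inlₗ x : α ⊕ₗ β) (inlₗ y) ↔ sim1 x y :=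
  sim1_map_iff (.ofStrictMono (inlₗ : α → α ⊕ₗ β) Sum.Lex.inl_strictMono)
    isLowerSet_range_inlₗ.ordConnected

theorem sim1_inrₗ_inrₗ {x y : β} : sim1 (inrₗ x : α ⊕ₗ β) (inrₗ y) ↔ sim1 x y :=
  sim1_map_iff (.ofStrictMono (inrₗ : β → α ⊕ₗ β) Sum.Lex.inr_strictMono)
    isUpperSet_range_inrₗ.ordConnected

theorem Icc_inlₗ_inrₗ (x : α) (y : β) :
    Icc (inlₗ x : α ⊕ₗ β) (inrₗ y) = inlₗ '' Ici x ∪ inrₗ '' Iic y := by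
  ext z
  obtain ⟨z | z, rfl⟩ := toLex.surjective z <;> simp

theorem sim1_inlₗ_inrₗ {x : α} {y : β} :
    sim1 (inlₗ x : α ⊕ₗ β) (inrₗ y) ↔ (Ici x).Finite ∧ (Iic y).Finite := by
  rw [sim1_iff_finite_Icc (Sum.Lex.inl_le_inr x y), Icc_inlₗ_inrₗ, finite_union,
    finite_image_iff (f := inlₗ) (toLex.injective.comp inl_injective).injOn,
    finite_image_iff (f := inrₗ) (toLex.injective.comp inr_injective).injOn]

end SumLex

namespace HDeriv

variable {α β : Type} [LinearOrder α] [LinearOrder β]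

theorem mk_inlₗ_le_mk_inlₗ {x y : α} : mk (inlₗ x : α ⊕ₗ β) ≤ mk (inlₗ y) ↔ mk x ≤ mk y := by
  rw [mk_le_mk, mk_le_mk, Sum.Lex.inl_le_inl_iff, sim1_inlₗ_inlₗ]

theorem mk_inrₗ_le_mk_inrₗ {x y : β} : mk (inrₗ x : α ⊕ₗ β) ≤ mk (inrₗ y) ↔ mk x ≤ mk y := by
  rw [mk_le_mk, mk_le_mk, Sum.Lex.inr_le_inr_iff, sim1_inrₗ_inrₗ]

theorem mk_inlₗ_le_mk_inrₗ (x : α) (y : β) : mk (inlₗ x : α ⊕ₗ β) ≤ mk (inrₗ y) :=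
  mk_monotone (Sum.Lex.inl_le_inr x y)

theorem mk_inrₗ_le_mk_inlₗ {x : α} {y : β} :
    mk (inrₗ y : α ⊕ₗ β) ≤ mk (inlₗ x) ↔ (Ici x).Finite ∧ (Iic y).Finite := by
  rw [mk_le_mk, sim1_comm, sim1_inlₗ_inrₗ, or_iff_right Sum.Lex.not_inr_le_inl]

noncomputable def sumLexOrderIso (h : (¬ ∃ a : α, ∀ x, x ≤ a) ∨ ¬ ∃ b : β, ∀ y, b ≤ y) :
    HDeriv (α ⊕ₗ β) ≃o HDeriv α ⊕ₗ HDeriv β :=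
  orderIsoOfSurjective (fun z => toLex (Sum.map mk mk (ofLex z)))
    (toLex.surjective.comp ((Sum.map_surjective.2 ⟨mk_surjective, mk_surjective⟩).comp
      ofLex.surjective))
    (by
      have hsep (x : α) (y : β) : ¬ ((Ici x).Finite ∧ (Iic y).Finite) := fun ⟨hx, hy⟩ =>
        h.elim (· (exists_forall_le_of_finite_Ici hx)) (· (exists_forall_ge_of_finite_Iic hy))
      rintro (x | x) (y | y)
      · exact Sum.Lex.inl_le_inl_iff.trans mk_inlₗ_le_mk_inlₗ.symm
      · exact iff_of_true (Sum.Lex.inl_le_inr _ _) (mk_inlₗ_le_mk_inrₗ x y)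
      · exact iff_of_false Sum.Lex.not_inr_le_inl (mk_inrₗ_le_mk_inlₗ.not.2 (hsep y x))
      · exact Sum.Lex.inr_le_inr_iff.trans mk_inrₗ_le_mk_inrₗ.symm)

section Glue

variable [OrderTop α]

open Classical in
noncomputable def sumLexGlue : α ⊕ₗ β → HDeriv α ⊕ₗ {y : HDeriv β // ¬ IsMin y}
  | inlₗ x => inlₗ (mk x)
  | inrₗ y => if h : IsMin (mk y) then inlₗ ⊤ else inrₗ ⟨mk y, h⟩

theorem sumLexGlue_inlₗ (x : α) : sumLexGlue (inlₗ x : α ⊕ₗ β) = inlₗ (mk x) := rfl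

theorem sumLexGlue_inrₗ_of_isMin {y : β} (h : IsMin (mk y)) :
    sumLexGlue (inrₗ y : α ⊕ₗ β) = inlₗ ⊤ := dif_pos h

theorem sumLexGlue_inrₗ_of_not_isMin {y : β} (h : ¬ IsMin (mk y)) :
    sumLexGlue (inrₗ y : α ⊕ₗ β) = inrₗ ⟨mk y, h⟩ := dif_neg h

theorem sumLexGlue_surjective : Surjective (sumLexGlue : α ⊕ₗ β → _) := by
  rintro (c | ⟨c, hc⟩)
  · obtain ⟨x, rfl⟩ := mk_surjective c
    exact ⟨inlₗ x, rfl⟩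
  · obtain ⟨y, rfl⟩ := mk_surjective c
    exact ⟨inrₗ y, sumLexGlue_inrₗ_of_not_isMin hc⟩

theorem sumLexGlue_le_sumLexGlue_iff [OrderBot β] (z w : α ⊕ₗ β) :
    sumLexGlue z ≤ sumLexGlue w ↔ mk z ≤ mk w := by
  obtain ⟨x | x, rfl⟩ := toLex.surjective z <;> obtain ⟨y | y, rfl⟩ := toLex.surjective w
  · exact Sum.Lex.inl_le_inl_iff.trans mk_inlₗ_le_mk_inlₗ.symm
  · refine iff_of_true ?_ (mk_inlₗ_le_mk_inrₗ x y)
    by_cases hy : IsMin (mk y)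
    · rw [sumLexGlue_inrₗ_of_isMin hy]
      exact Sum.Lex.inl_le_inl_iff.2 le_top
    · rw [sumLexGlue_inrₗ_of_not_isMin hy]
      exact Sum.Lex.inl_le_inr _ _
  · rw [mk_inrₗ_le_mk_inlₗ, ← mk_eq_top_iff, ← isMin_mk_iff, sumLexGlue_inlₗ]
    by_cases hx : IsMin (mk x)
    · rw [sumLexGlue_inrₗ_of_isMin hx, Sum.Lex.inl_le_inl_iff, top_le_iff, and_iff_left hx]
    · rw [sumLexGlue_inrₗ_of_not_isMin hx]
      exact iff_of_false Sum.Lex.not_inr_le_inl fun h => hx h.2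
  · rw [mk_inrₗ_le_mk_inrₗ]
    by_cases hx : IsMin (mk x) <;> by_cases hy : IsMin (mk y)
    · rw [sumLexGlue_inrₗ_of_isMin hx, sumLexGlue_inrₗ_of_isMin hy]
      exact iff_of_true le_rfl (hx.eq_bot.trans_le bot_le)
    · rw [sumLexGlue_inrₗ_of_isMin hx, sumLexGlue_inrₗ_of_not_isMin hy]
      exact iff_of_true (Sum.Lex.inl_le_inr _ _) (hx.eq_bot.trans_le bot_le)
    · rw [sumLexGlue_inrₗ_of_not_isMin hx, sumLexGlue_inrₗ_of_isMin hy]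
      exact iff_of_false Sum.Lex.not_inr_le_inl fun h => hx (hy.mono h)
    · rw [sumLexGlue_inrₗ_of_not_isMin hx, sumLexGlue_inrₗ_of_not_isMin hy]
      exact Sum.Lex.inr_le_inr_iff

noncomputable def sumLexOrderIsoOfTopBot [OrderBot β] :
    HDeriv (α ⊕ₗ β) ≃o HDeriv α ⊕ₗ {y : HDeriv β // ¬ IsMin y} :=
  orderIsoOfSurjective sumLexGlue sumLexGlue_surjective sumLexGlue_le_sumLexGlue_iff

end Glue

end HDeriv

/-- First Hausdorff derivative of an ordered sum: if `L₁` has no maximum or `L₂`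
has no minimum then `(L₁ + L₂)^(1) ≅ L₁^(1) + L₂^(1)`; if `L₁` has a maximum and
`L₂` has a minimum, then `(L₁ + L₂)^(1)` is `L₁^(1) + L₂^(1)` with the maximum of
`L₁^(1)` identified with the minimum of `L₂^(1)` (i.e. it is `L₁^(1)` followed by
the non-minimal part of `L₂^(1)`). -/
theorem stmt_8 (L₁ L₂ : Type) [LinearOrder L₁] [LinearOrder L₂] :
    (((¬ ∃ a : L₁, ∀ x, x ≤ a) ∨ (¬ ∃ b : L₂, ∀ x, b ≤ x)) →
      Nonempty (HDeriv (L₁ ⊕ₗ L₂) ≃o ((HDeriv L₁) ⊕ₗ (HDeriv L₂)))) ∧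
    ((∃ a : L₁, ∀ x, x ≤ a) → (∃ b : L₂, ∀ x, b ≤ x) →
      Nonempty (HDeriv (L₁ ⊕ₗ L₂) ≃o ((HDeriv L₁) ⊕ₗ {y : HDeriv L₂ // ¬ IsMin y}))) := by
  refine ⟨fun h => ⟨HDeriv.sumLexOrderIso h⟩, ?_⟩
  rintro ⟨a, ha⟩ ⟨b, hb⟩
  let _ : OrderTop L₁ := { top := a, le_top := ha }
  let _ : OrderBot L₂ := { bot := b, bot_le := hb }
  exact ⟨HDeriv.sumLexOrderIsoOfTopBot⟩
end

section
/- Any suffix of an ω-sum of finitely presented linear orders is an ω-sum: if L, L', L̃ are finitely presented linear orders with L' = L + L̃, L̃ nonempty, and L' ≅ ω ×ₗ M for some M, then there exists a finitely presented linear order L̄ such that L' ≅ ω ×ₗ (L + L̄) and L̃ ≅ ω ×ₗ (L̄ + L). -/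
/-- The class of finitely presented linear orders: the smallest
isomorphism-closed class containing `0` and `1` and closed under binary ordered
sums and the operations `L ↦ ω ×ₗ L` and `L ↦ ω* ×ₗ L`
(here `ℕ ×ₗ A = ∑_{n∈ω} A` and `ℕᵒᵈ ×ₗ A = ∑_{n∈ω*} A`). -/
inductive IsFP : (L : Type) → [_inst : LinearOrder L] → Prop where
  | zero : IsFP (Fin 0)
  | one : IsFP (Fin 1)
  | iso {A B : Type} [LinearOrder A] [LinearOrder B] :
      IsFP A → Nonempty (A ≃o B) → IsFP B
  | sum {A B : Type} [LinearOrder A] [LinearOrder B] :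
      IsFP A → IsFP B → IsFP (A ⊕ₗ B)
  | omega {A : Type} [LinearOrder A] : IsFP A → IsFP (ℕ ×ₗ A)
  | omegaStar {A : Type} [LinearOrder A] : IsFP A → IsFP (ℕᵒᵈ ×ₗ A)

/-!
Let `f : L + L̃ ≅ ω·M`. Since `L̃` is nonempty, the image of `L` lies in the first `n` copies of
`M` for some `n ≥ 1`; let `L̄` be the part of `L̃` mapped into those copies. It is an initial
segment of `L̃`, hence finitely presented: initial segments of finitely presented orders are
finitely presented, by induction on the presentation. Now `L + L̄ ≅ n·M`, so
`ω·(L + L̄) ≅ ω·(n·M) ≅ ω·M`, and the rest of `L̃` is again `≅ ω·M`. Hence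
`L̃ ≅ L̄ + ω·(L + L̄) ≅ ω·(L̄ + L)` and `L + L̃ ≅ L + ω·(L̄ + L) ≅ ω·(L + L̄)`.
-/

open Sum Set

namespace OrderIso

variable {α β : Type*}

def subtypePreimage [Preorder α] [Preorder β] (e : α ≃o β) (s : Set β) : ↥(e ⁻¹' s) ≃o ↥s :=
  ⟨e.toEquiv.subtypeEquiv fun _ => Iff.rfl, e.le_iff_le⟩

def prodLexSubtypeFst [Preorder α] [Preorder β] (s : Set α) :
    {x : α ×ₗ β // (ofLex x).1 ∈ s} ≃o s ×ₗ β where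
  toFun x := toLex (⟨(ofLex x.1).1, x.2⟩, (ofLex x.1).2)
  invFun y := ⟨toLex ((ofLex y).1.1, (ofLex y).2), (ofLex y).1.2⟩
  left_inv _ := rfl
  right_inv _ := rfl
  map_rel_iff' {x y} := by
    change toLex (_, _) ≤ toLex (_, _) ↔ _
    simp [Prod.Lex.le_iff, ← Subtype.coe_le_coe]

variable [LinearOrder α] [LinearOrder β]

open Classical in
noncomputable def sumLexCompl (s : Set α) (hs : IsLowerSet s) : ↥s ⊕ₗ ↥sᶜ ≃o α where
  toEquiv := ofLex.trans (Equiv.Set.sumCompl s)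
  map_rel_iff' := by
    simp_rw [Lex.forall]
    rintro (⟨a, ha⟩ | ⟨a, ha⟩) (⟨b, hb⟩ | ⟨b, hb⟩) <;> simp
    · exact le_of_not_ge fun h => hb (hs h ha)
    · exact lt_of_not_ge fun h => ha (hs h hb)

noncomputable def sumLexPreimage (s : Set (α ⊕ₗ β)) :
    ↥((toLex ∘ inl) ⁻¹' s) ⊕ₗ ↥((toLex ∘ inr) ⁻¹' s) ≃o ↥s :=
  StrictMono.orderIsoOfSurjective
    (fun x => Sum.elim (fun a => ⟨toLex (inl a.1), a.2⟩) (fun b => ⟨toLex (inr b.1), b.2⟩)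
      (ofLex x))
    (by simp_rw [StrictMono, Lex.forall]; rintro (a | b) (a' | b') <;> simp [← Subtype.coe_lt_coe])
    (by rintro ⟨a | b, h⟩; exacts [⟨toLex (inl ⟨a, h⟩), rfl⟩, ⟨toLex (inr ⟨b, h⟩), rfl⟩])

variable (α β)

noncomputable def natLexSucc : α ⊕ₗ ℕ ×ₗ α ≃o ℕ ×ₗ α :=
  StrictMono.orderIsoOfSurjective
    (fun x => Sum.elim (fun a => toLex (0, a)) (fun p => toLex ((ofLex p).1 + 1, (ofLex p).2))
      (ofLex x))
    (by simp [StrictMono, Lex.forall, Sum.forall, Prod.forall, Prod.Lex.lt_iff])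
    (by
      rintro ⟨_ | n, a⟩
      exacts [⟨toLex (inl a), rfl⟩, ⟨toLex (inr (toLex (n, a))), rfl⟩])

open OrderDual in
noncomputable def natDualLexSucc : ℕᵒᵈ ×ₗ α ⊕ₗ α ≃o ℕᵒᵈ ×ₗ α :=
  StrictMono.orderIsoOfSurjective
    (fun x => Sum.elim (fun p => toLex (toDual (ofDual (ofLex p).1 + 1), (ofLex p).2))
      (fun a => toLex (toDual 0, a)) (ofLex x))
    (by
      simp [StrictMono, Lex.forall, Sum.forall, Prod.forall, Prod.Lex.lt_iff, OrderDual.forall,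
        -toDual_add, -toDual_zero])
    (by
      rintro ⟨n, a⟩
      induction n using OrderDual.rec with | _ n => ?_
      rcases n with _ | n
      exacts [⟨toLex (inr a), rfl⟩, ⟨toLex (inl (toLex (toDual n, a))), rfl⟩])

noncomputable def natLexSumLexRotate : α ⊕ₗ ℕ ×ₗ (β ⊕ₗ α) ≃o ℕ ×ₗ (α ⊕ₗ β) :=
  StrictMono.orderIsoOfSurjective
    (fun x => Sum.elim (fun a => toLex (0, toLex (inl a)))
      (fun p => Sum.elim (fun b => toLex ((ofLex p).1, toLex (inr b)))
          (fun a => toLex ((ofLex p).1 + 1, toLex (inl a))) (ofLex (ofLex p).2))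
      (ofLex x))
    (by
      simp only [StrictMono, Lex.forall, Sum.forall, Prod.forall]
      simp [Prod.Lex.lt_iff]
      grind)
    (by
      rintro ⟨n, a | b⟩
      · rcases n with _ | n
        exacts [⟨toLex (inl a), rfl⟩, ⟨toLex (inr (toLex (n, toLex (inr a)))), rfl⟩]
      · exact ⟨toLex (inr (toLex (n, toLex (inl b)))), rfl⟩)

noncomputable def natLexFin (k : ℕ) [NeZero k] : ℕ ×ₗ Fin k ≃o ℕ :=
  StrictMono.orderIsoOfSurjective (fun x => (ofLex x).1 * k + (ofLex x).2)
    (by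
      simp only [StrictMono, Lex.forall, Prod.forall, Prod.Lex.lt_iff, ofLex_toLex]
      rintro q r q' r' (h | ⟨rfl, h⟩)
      · have := r.2
        nlinarith
      · simpa using h)
    (fun n => ⟨toLex (n / k, ⟨n % k, Nat.mod_lt _ (NeZero.pos k)⟩), by simp [Nat.div_add_mod']⟩)

end OrderIso

namespace IsFP

variable {A : Type} [LinearOrder A]

theorem of_subsingleton [Subsingleton A] : IsFP A := by
  rcases isEmpty_or_nonempty A with _ | ⟨⟨a⟩⟩
  · exact .iso .zero ⟨OrderIso.ofIsEmpty _ _⟩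
  · have : Unique A := uniqueOfSubsingleton a
    exact .iso .one ⟨OrderIso.ofUnique _ _⟩

theorem of_eq_univ (hA : IsFP A) {s : Set A} (hs : s = univ) : IsFP s :=
  .iso hA ⟨(OrderIso.setCongr _ _ hs).trans OrderIso.Set.univ |>.symm⟩

theorem of_isLowerSet_natLex (hA : IsFP A) (hlow : ∀ t : Set A, IsLowerSet t → IsFP t)
    (s : Set (ℕ ×ₗ A)) (hs : IsLowerSet s) : IsFP s := by
  -- A proper initial segment misses some `(n, a)`; strip off the first copy of `A` `n` times.
  have of_tail : ∀ s : Set (ℕ ×ₗ A), IsLowerSet s →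
      IsFP ((toLex ∘ inr) ⁻¹' (OrderIso.natLexSucc A ⁻¹' s)) → IsFP s := fun s hs h =>
    .iso (.sum (hlow _ ((hs.preimage (OrderIso.monotone _)).preimage Sum.Lex.inl_mono)) h)
      ⟨(OrderIso.sumLexPreimage _).trans (OrderIso.subtypePreimage _ s)⟩
  by_cases hu : s = univ
  · exact (omega hA).of_eq_univ hu
  obtain ⟨⟨n, a⟩, hna⟩ := (ne_univ_iff_exists_notMem s).mp hu
  clear hu
  induction n generalizing s with
  | zero =>
    have : IsEmpty ((toLex ∘ inr) ⁻¹' (OrderIso.natLexSucc A ⁻¹' s)) :=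
      ⟨fun ⟨x, hx⟩ => hna (hs (Prod.Lex.toLex_le_toLex.2 (.inl (Nat.succ_pos _))) hx)⟩
    exact of_tail s hs of_subsingleton
  | succ n ih =>
    exact of_tail s hs (ih _ ((hs.preimage (OrderIso.monotone _)).preimage Sum.Lex.inr_mono) hna)

theorem of_isLowerSet_natDualLex (hA : IsFP A) (hlow : ∀ t : Set A, IsLowerSet t → IsFP t)
    (s : Set (ℕᵒᵈ ×ₗ A)) (hs : IsLowerSet s) : IsFP s := by
  -- A nonempty initial segment contains some `(n, a)`; strip off the last copy of `A` `n` times.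
  have of_head : ∀ s : Set (ℕᵒᵈ ×ₗ A), IsLowerSet s →
      IsFP ((toLex ∘ inl) ⁻¹' (OrderIso.natDualLexSucc A ⁻¹' s)) → IsFP s := fun s hs h =>
    .iso (.sum h (hlow _ ((hs.preimage (OrderIso.monotone _)).preimage Sum.Lex.inr_mono)))
      ⟨(OrderIso.sumLexPreimage _).trans (OrderIso.subtypePreimage _ s)⟩
  rcases s.eq_empty_or_nonempty with rfl | ⟨⟨n, a⟩, hna⟩
  · exact of_subsingleton
  induction n using OrderDual.rec with | _ n => ?_
  induction n generalizing s with
  | zero =>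
    refine of_head s hs ((omegaStar hA).of_eq_univ (eq_univ_of_forall fun x => ?_))
    exact hs (Prod.Lex.toLex_le_toLex.2 (.inl (OrderDual.toDual_lt_toDual.2 (Nat.succ_pos _)))) hna
  | succ n ih =>
    exact of_head s hs (ih _ ((hs.preimage (OrderIso.monotone _)).preimage Sum.Lex.inl_mono) hna)

theorem of_isLowerSet (hA : IsFP A) (s : Set A) (hs : IsLowerSet s) : IsFP s := by
  induction hA with
  | zero | one => exact of_subsingleton
  | iso _ he ih =>
    obtain ⟨e⟩ := he
    exact .iso (ih _ (hs.preimage e.monotone)) ⟨e.subtypePreimage s⟩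
  | sum _ _ ihA ihB =>
    exact .iso (.sum (ihA _ (hs.preimage Sum.Lex.inl_mono)) (ihB _ (hs.preimage Sum.Lex.inr_mono)))
      ⟨OrderIso.sumLexPreimage s⟩
  | omega hA ih => exact of_isLowerSet_natLex hA ih s hs
  | omegaStar hA ih => exact of_isLowerSet_natDualLex hA ih s hs

end IsFP

theorem exists_isLowerSet_of_sumLex_orderIso_natLex {L Lt M : Type} [LinearOrder L]
    [LinearOrder Lt] [LinearOrder M] (f : L ⊕ₗ Lt ≃o ℕ ×ₗ M) (t₀ : Lt) :
    ∃ B : Set Lt, IsLowerSet B ∧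
      Nonempty (ℕ ×ₗ (L ⊕ₗ B) ≃o ℕ ×ₗ M) ∧ Nonempty (↥Bᶜ ≃o ℕ ×ₗ M) := by
  set n := (ofLex (f (toLex (inr t₀)))).1 + 1
  let P : Set (ℕ ×ₗ M) := (fun x => (ofLex x).1) ⁻¹' Iio n
  let B : Set Lt := (toLex ∘ inr) ⁻¹' (f ⁻¹' P)
  have hP : IsLowerSet (f ⁻¹' P) :=
    ((isLowerSet_Iio n).preimage Prod.Lex.monotone_fst_ofLex).preimage f.monotone
  have hinl (l : L) : toLex (inl l) ∈ f ⁻¹' P :=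
    Nat.lt_succ_of_le (Prod.Lex.monotone_fst_ofLex (f.monotone (Sum.Lex.inl_le_inr l t₀)))
  have : IsEmpty ((toLex ∘ inl) ⁻¹' (f ⁻¹' Pᶜ)) := ⟨fun ⟨l, hl⟩ => hl (hinl l)⟩
  have : Infinite ↥(Iio n)ᶜ := (finite_Iio n).infinite_compl.to_subtype
  have eHead : L ⊕ₗ B ≃o Fin n ×ₗ M :=
    (OrderIso.sumLexCongr
        ((OrderIso.setCongr _ _ (eq_univ_of_forall hinl)).trans OrderIso.Set.univ).symm
        (OrderIso.refl B)).trans <|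
      (OrderIso.sumLexPreimage _).trans <| (f.subtypePreimage P).trans <|
        (OrderIso.prodLexSubtypeFst (Iio n)).trans <|
          Prod.Lex.prodLexCongr Fin.orderIsoSubtype.symm (OrderIso.refl M)
  have eTail : ↥Bᶜ ≃o ℕ ×ₗ M :=
    OrderIso.emptySumLex.symm.trans <|
      (OrderIso.sumLexPreimage _).trans <| (f.subtypePreimage Pᶜ).trans <|
        (OrderIso.prodLexSubtypeFst (Iio n)ᶜ).trans <|
          Prod.Lex.prodLexCongr (Nat.Subtype.orderIsoOfNat _).symm (OrderIso.refl M)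
  refine ⟨B, hP.preimage Sum.Lex.inr_mono, ⟨?_⟩, ⟨eTail⟩⟩
  exact (Prod.Lex.prodLexCongr (OrderIso.refl ℕ) eHead).trans <|
    (Prod.Lex.prodLexAssoc ℕ (Fin n) M).symm.trans <|
      Prod.Lex.prodLexCongr (OrderIso.natLexFin n) (OrderIso.refl M)

theorem stmt_13_general (L Lt : Type) [LinearOrder L] [LinearOrder Lt]
    (hLt : IsFP Lt) (hne : Nonempty Lt)
    (h : ∃ (M : Type) (_ : LinearOrder M), Nonempty ((L ⊕ₗ Lt) ≃o (ℕ ×ₗ M))) :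
    ∃ (Lb : Type) (_ : LinearOrder Lb), IsFP Lb ∧
      Nonempty ((L ⊕ₗ Lt) ≃o (ℕ ×ₗ (L ⊕ₗ Lb))) ∧
      Nonempty (Lt ≃o (ℕ ×ₗ (Lb ⊕ₗ L))) := by
  obtain ⟨M, _, ⟨f⟩⟩ := h
  obtain ⟨t₀⟩ := hne
  obtain ⟨B, hB, ⟨ePeriod⟩, ⟨eSuffix⟩⟩ := exists_isLowerSet_of_sumLex_orderIso_natLex f t₀
  have eLt : Lt ≃o ℕ ×ₗ (B ⊕ₗ L) :=
    (OrderIso.sumLexCompl B hB).symm.trans <|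
      (OrderIso.sumLexCongr (OrderIso.refl B) (eSuffix.trans ePeriod.symm)).trans <|
        OrderIso.natLexSumLexRotate B L
  exact ⟨B, inferInstance, hLt.of_isLowerSet B hB,
    ⟨(OrderIso.sumLexCongr (OrderIso.refl L) eLt).trans (OrderIso.natLexSumLexRotate L B)⟩, ⟨eLt⟩⟩

/-- Any (nonempty) suffix of an ω-sum of finitely presented linear orders is an
ω-sum: if `L' = L + L̃` with `L̃` nonempty and `L' ≅ ω ×ₗ M` for some `M`, then
there is a finitely presented `L̄` with `L' ≅ ω ×ₗ (L + L̄)` and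
`L̃ ≅ ω ×ₗ (L̄ + L)`. -/
theorem stmt_13 (L Lt : Type) [LinearOrder L] [LinearOrder Lt]
    (hL : IsFP L) (hLt : IsFP Lt) (hne : Nonempty Lt)
    (h : ∃ (M : Type) (_ : LinearOrder M), Nonempty ((L ⊕ₗ Lt) ≃o (ℕ ×ₗ M))) :
    ∃ (Lb : Type) (_ : LinearOrder Lb), IsFP Lb ∧
      Nonempty ((L ⊕ₗ Lt) ≃o (ℕ ×ₗ (L ⊕ₗ Lb))) ∧
      Nonempty (Lt ≃o (ℕ ×ₗ (Lb ⊕ₗ L))) :=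
  stmt_13_general L Lt hLt hne h
end
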